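/- arXiv:1306.5637 — 2 statements merged into one kernel-verified Lean document; each statement's English description precedes it below -/
import Mathlib

section
/- In C_{3k+1}, any two nonadjacent distinct vertices have at least C(2k,k) common neighbors, where C(2k,k) is the central binomial coefficient. -/
/-!
Write vertices as `x` with a set `F` of coordinates flipped, so that `d(x_F, x) = |F|` and
`d(x_F, y) = |F ∆ D|` with `D = {i | x i ≠ y i}`, `|D| ≤ 2k`. Enlarge `D` to a set `W` of `2k`
coordinates; its complement has `k + 1`. The `C(2k, k)` sets `F = S ∪ Wᶜ` with `S ⊆ W`, `|S| = k`,
have `|F| = 2k + 1`. If such an `F` also has `|F ∆ D| ≥ 2k + 1` it is a common neighbour; otherwise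
`F ∆ D ∆ W` (flip `y` on `Wᶜ` and on `W \ S`) is one, at distance exactly `2k + 1` from `y` and
more than `2k + 1` from `x`, hence distinct from every set of the first kind.
-/

/-- The graph `C_{3k+1}`: vertices are vectors in `(Z/2)^{3k+1}`,
adjacent iff their Hamming distance is at least `2k+1`. -/
def hypercubeGraph (k : ℕ) : SimpleGraph (Fin (3 * k + 1) → ZMod 2) where
  Adj x y := 2 * k + 1 ≤ hammingDist x y
  symm := by constructor; intro x y h; rwa [hammingDist_comm]
  loopless := by constructor; intro x h; rw [hammingDist_self] at h; omega

open Finset symmDiff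

namespace Finset

variable {ι : Type*} [DecidableEq ι]

theorem card_symmDiff_add_two_mul_card_inter (s t : Finset ι) :
    #(s ∆ t) + 2 * #(s ∩ t) = #s + #t := by
  have hs := card_sdiff_add_card_inter s t
  have ht := card_sdiff_add_card_inter t s
  rw [inter_comm] at ht
  rw [symmDiff_def, sup_eq_union, card_union_of_disjoint disjoint_sdiff_sdiff]
  omega

theorem card_symmDiff_add_card_of_compl_subset [Fintype ι] {s t : Finset ι} (h : tᶜ ⊆ s) :
    #(s ∆ t) + #s = #t + 2 * #tᶜ := by
  have hst : s ∩ t = s \ tᶜ := by rw [sdiff_eq_inter_compl, compl_compl]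
  have := card_symmDiff_add_two_mul_card_inter s t
  rw [hst, card_sdiff_of_subset h] at this
  have := card_le_card h
  omega

theorem card_le_card_of_forall_mem_or_apply_mem {s t : Finset ι} {g : ι → ι}
    (hg : Set.InjOn g s) (h : ∀ a ∈ s, a ∈ t ∨ g a ∈ t ∧ g a ∉ s) : #s ≤ #t := by
  refine card_le_card_of_injOn (fun a => if a ∈ t then a else g a) (fun a ha => ?_) ?_
  · by_cases hat : a ∈ t
    · simp only [hat, if_true, mem_coe]
    · simp only [hat, if_false, mem_coe]
      exact ((h a ha).resolve_left hat).1
  · intro a ha b hb hab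
    have hga : ∀ c ∈ s, c ∉ t → g c ∉ s := fun c hc hct => ((h c hc).resolve_left hct).2
    by_cases hat : a ∈ t <;> by_cases hbt : b ∈ t <;> simp only [hat, hbt, if_true, if_false] at hab
    · exact hab
    · exact absurd (hab ▸ ha) (hga b hb hbt)
    · exact absurd (hab ▸ hb) (hga a ha hat)
    · exact hg ha hb hab

theorem choose_le_card_filter_card_symmDiff [Fintype ι] {k : ℕ} (hι : Fintype.card ι = 3 * k + 1)
    {D : Finset ι} (hD : #D ≤ 2 * k) :
    (2 * k).choose k ≤ #{F : Finset ι | 2 * k + 1 ≤ #F ∧ 2 * k + 1 ≤ #(F ∆ D)} := by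
  obtain ⟨W, hDW, hW⟩ := exists_superset_card_eq hD (by omega : 2 * k ≤ Fintype.card ι)
  have hWc : #Wᶜ = k + 1 := by rw [card_compl, hW]; omega
  set A := (powersetCard k W).image (· ∪ Wᶜ)
  have hA : ∀ F ∈ A, Wᶜ ⊆ F ∧ #F = 2 * k + 1 := by
    simp only [A, mem_image, mem_powersetCard]
    rintro _ ⟨S, ⟨hSW, hS⟩, rfl⟩
    refine ⟨subset_union_right, ?_⟩
    rw [card_union_of_disjoint (disjoint_compl_right.mono_left hSW), hS, hWc]
    ring
  have hAcard : #A = (2 * k).choose k := by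
    rw [card_image_of_injOn, card_powersetCard, hW]
    intro S hS T hT hST
    simp only [mem_coe, mem_powersetCard] at hS hT
    rw [← union_sdiff_cancel_right (disjoint_compl_right.mono_left hS.1),
      ← union_sdiff_cancel_right (disjoint_compl_right.mono_left hT.1)]
    exact congrArg (· \ Wᶜ) hST
  rw [← hAcard]
  refine card_le_card_of_forall_mem_or_apply_mem (g := fun F => F ∆ D ∆ W)
    ((symmDiff_left_injective W).comp (symmDiff_left_injective D)).injOn fun F hF => ?_
  obtain ⟨hWF, hF⟩ := hA F hF
  by_cases hFD : 2 * k + 1 ≤ #(F ∆ D)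
  · exact Or.inl (mem_filter.mpr ⟨mem_univ _, hF.ge, hFD⟩)
  right
  have hWG : Wᶜ ⊆ F ∆ D := fun i hi => mem_symmDiff.mpr
    (Or.inl ⟨hWF hi, fun hiD => mem_compl.mp hi (hDW hiD)⟩)
  have hcardG := card_symmDiff_add_card_of_compl_subset hWG
  have hcardF := card_symmDiff_add_card_of_compl_subset hWF
  have hcancel : #(F ∆ D ∆ W ∆ D) = #(F ∆ W) := by
    rw [symmDiff_right_comm, symmDiff_symmDiff_cancel_right]
  refine ⟨mem_filter.mpr ⟨mem_univ _, by omega, by omega⟩, fun hA' => ?_⟩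
  have hcard := (hA _ hA').2
  omega

end Finset

section Flip

variable {ι : Type*} [DecidableEq ι]

def flipOn (x : ι → ZMod 2) (F : Finset ι) : ι → ZMod 2 :=
  fun i => if i ∈ F then x i + 1 else x i

theorem flipOn_injective (x : ι → ZMod 2) : Function.Injective (flipOn x) := by
  intro F G h
  ext i
  have hi := congrFun h i
  by_cases hF : i ∈ F <;> by_cases hG : i ∈ G <;> simp_all [flipOn]

variable [Fintype ι]

theorem hammingDist_flipOn (x y : ι → ZMod 2) (F : Finset ι) :
    hammingDist (flipOn x F) y = #(F ∆ ({i | x i ≠ y i} : Finset ι)) := by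
  have hflip : ∀ a b : ZMod 2, a + 1 ≠ b ↔ a = b := by decide
  unfold hammingDist
  congr 1
  ext i
  rw [mem_filter, mem_symmDiff, mem_filter]
  by_cases hF : i ∈ F <;> simp [flipOn, hF, hflip]

theorem hammingDist_flipOn_self (x : ι → ZMod 2) (F : Finset ι) :
    hammingDist (flipOn x F) x = #F := by
  simp [hammingDist_flipOn, ← bot_eq_empty]

end Flip

theorem stmt_4_general (k : ℕ) (x y : Fin (3 * k + 1) → ZMod 2)
    (nxy : ¬ (hypercubeGraph k).Adj x y) :
    Nat.choose (2 * k) k ≤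
      {v | (hypercubeGraph k).Adj v x ∧ (hypercubeGraph k).Adj v y}.ncard := by
  set D : Finset (Fin (3 * k + 1)) := {i | x i ≠ y i}
  have hD : #D ≤ 2 * k := Nat.lt_succ_iff.mp (not_le.mp nxy)
  let flips : Finset (Finset (Fin (3 * k + 1))) := {F | 2 * k + 1 ≤ #F ∧ 2 * k + 1 ≤ #(F ∆ D)}
  calc (2 * k).choose k ≤ #flips := choose_le_card_filter_card_symmDiff (Fintype.card_fin _) hD
    _ = (↑(flips.image (flipOn x)) : Set (Fin (3 * k + 1) → ZMod 2)).ncard := by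
      rw [Set.ncard_coe_finset, card_image_of_injective _ (flipOn_injective x)]
    _ ≤ _ := by
      refine Set.ncard_le_ncard ?_ (Set.toFinite _)
      rintro _ hv
      obtain ⟨F, hF, rfl⟩ := mem_image.mp (mem_coe.mp hv)
      obtain ⟨hFx, hFy⟩ := (mem_filter.mp hF).2
      show 2 * k + 1 ≤ _ ∧ 2 * k + 1 ≤ _
      rw [hammingDist_flipOn_self, hammingDist_flipOn]
      exact ⟨hFx, hFy⟩

theorem stmt_4 (k : ℕ) (hk : 0 < k) (x y : Fin (3 * k + 1) → ZMod 2)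
    (hxy : x ≠ y) (nxy : ¬ (hypercubeGraph k).Adj x y) :
    Nat.choose (2 * k) k ≤
      {v | (hypercubeGraph k).Adj v x ∧ (hypercubeGraph k).Adj v y}.ncard :=
  stmt_4_general k x y nxy
end

section
/- In C_{3k+1}, for any two distinct vertices x, y at even Hamming distance 2t (1 ≤ t ≤ k), the number of common neighbors of x and y is at least C(3k+1−2t, k−t)·C(2t, t), and this quantity is minimized over t ∈ {1,...,k} at t = k, where it equals C(2k,k). -/
open Finset
open scoped symmDiff

namespace Nat

theorem centralBinom_succ_le_four_mul (n : ℕ) : centralBinom (n + 1) ≤ 4 * centralBinom n :=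
  Nat.le_of_mul_le_mul_left (c := n + 1)
    (calc (n + 1) * centralBinom (n + 1) = 2 * (2 * n + 1) * centralBinom n :=
            succ_mul_centralBinom_succ n
      _ ≤ (n + 1) * (4 * centralBinom n) := by nlinarith)
    n.succ_pos

theorem choose_add_two_succ_mul (m u : ℕ) :
    (m + 2).choose (u + 1) * ((u + 1) * (m + 1 - u)) = (m + 2) * (m + 1) * m.choose u :=
  calc (m + 2).choose (u + 1) * ((u + 1) * (m + 1 - u))
      = (m + 2) * (m + 1).choose u * (m + 1 - u) := by
        rw [add_one_mul_choose_eq (m + 1) u]; ring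
    _ = (m + 2) * (m + 1) * m.choose u := by
        rw [mul_assoc, ← choose_mul_succ_eq]; ring

theorem four_mul_choose_le_choose_add_two {m u : ℕ}
    (h : 4 * ((u + 1) * (m + 1 - u)) ≤ (m + 2) * (m + 1)) :
    4 * m.choose u ≤ (m + 2).choose (u + 1) := by
  rcases lt_or_ge m u with hmu | hum
  · simp [choose_eq_zero_of_lt hmu]
  refine Nat.le_of_mul_le_mul_right ?_ (Nat.mul_pos u.succ_pos (by omega : 0 < m + 1 - u))
  calc 4 * m.choose u * ((u + 1) * (m + 1 - u))
      = 4 * ((u + 1) * (m + 1 - u)) * m.choose u := by ring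
    _ ≤ (m + 2) * (m + 1) * m.choose u := Nat.mul_le_mul_right _ h
    _ = _ := (choose_add_two_succ_mul m u).symm

end Nat

theorem choose_mul_centralBinom_succ_le {k t : ℕ} (h : t + 1 ≤ k) :
    (3 * k + 1 - 2 * (t + 1)).choose (k - (t + 1)) * (2 * (t + 1)).choose (t + 1) ≤
      (3 * k + 1 - 2 * t).choose (k - t) * (2 * t).choose t := by
  obtain ⟨u, rfl⟩ : ∃ u, k = t + u + 1 := ⟨k - t - 1, by omega⟩
  rw [show 3 * (t + u + 1) + 1 - 2 * (t + 1) = t + 3 * u + 2 by omega,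
    show t + u + 1 - (t + 1) = u by omega,
    show 3 * (t + u + 1) + 1 - 2 * t = t + 3 * u + 4 by omega,
    show t + u + 1 - t = u + 1 by omega, ← Nat.centralBinom_eq_two_mul_choose,
    ← Nat.centralBinom_eq_two_mul_choose]
  have hcentral := Nat.centralBinom_succ_le_four_mul t
  have hside : 4 * (t + 3 * u + 2).choose u ≤ (t + 3 * u + 4).choose (u + 1) :=
    Nat.four_mul_choose_le_choose_add_two (by
      rw [show t + 3 * u + 2 + 1 - u = t + 2 * u + 3 by omega]; nlinarith)
  calc (t + 3 * u + 2).choose u * Nat.centralBinom (t + 1)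
      ≤ (t + 3 * u + 2).choose u * (4 * Nat.centralBinom t) := Nat.mul_le_mul_left _ hcentral
    _ = 4 * (t + 3 * u + 2).choose u * Nat.centralBinom t := by ring
    _ ≤ _ := Nat.mul_le_mul_right _ hside

theorem choose_mul_centralBinom_at_self (k : ℕ) :
    (3 * k + 1 - 2 * k).choose (k - k) * (2 * k).choose k = (2 * k).choose k := by
  simp

theorem centralBinom_le_choose_mul_centralBinom {k t : ℕ} (ht : t ≤ k) :
    (2 * k).choose k ≤ (3 * k + 1 - 2 * t).choose (k - t) * (2 * t).choose t := by
  induction ht using Nat.decreasingInduction with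
  | self => exact (choose_mul_centralBinom_at_self k).ge
  | of_succ t ht ih => exact ih.trans (choose_mul_centralBinom_succ_le ht)

section Flip

variable {ι : Type*} [DecidableEq ι]

def flipCoords (S : Finset ι) (x : ι → ZMod 2) : ι → ZMod 2 :=
  fun i => if i ∈ S then x i + 1 else x i

theorem hammingDist_flipCoords [Fintype ι] (S : Finset ι) (x y : ι → ZMod 2) :
    hammingDist (flipCoords S x) y = #(S ∆ ({i | x i ≠ y i} : Finset ι)) := by
  unfold hammingDist flipCoords
  congr 1
  ext i
  have add_one_ne_iff : ∀ a b : ZMod 2, a + 1 ≠ b ↔ a = b := by decide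
  by_cases hi : i ∈ S <;> simp [hi, mem_symmDiff, add_one_ne_iff]

theorem hammingDist_flipCoords_self [Fintype ι] (S : Finset ι) (x : ι → ZMod 2) :
    hammingDist (flipCoords S x) x = #S := by
  simp [hammingDist_flipCoords, ← bot_eq_empty]

theorem flipCoords_left_injective (x : ι → ZMod 2) :
    Function.Injective (flipCoords · x : Finset ι → ι → ZMod 2) := by
  intro S T h
  ext i
  have := congrFun h i
  unfold flipCoords at this
  by_cases hS : i ∈ S <;> by_cases hT : i ∈ T <;> simp_all

theorem choose_mul_choose_le_ncard_setOf_le_hammingDist [Fintype ι] (x y : ι → ZMod 2)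
    {a b r : ℕ}
    (hx : r ≤ a + b) (hy : r ≤ a + (hammingDist x y - b)) :
    (Fintype.card ι - hammingDist x y).choose a * (hammingDist x y).choose b ≤
      {v | r ≤ hammingDist v x ∧ r ≤ hammingDist v y}.ncard := by
  set D : Finset ι := {i | x i ≠ y i}
  have hD : hammingDist x y = #D := rfl
  rw [hD, ← card_compl, ← card_powersetCard, ← card_powersetCard, ← card_product,
    ← Set.ncard_coe_finset]
  have split : ∀ A B, A ⊆ Dᶜ → B ⊆ D →
      (A ∪ B) \ D = A ∧ D \ (A ∪ B) = D \ B ∧ (A ∪ B) ∩ D = B := by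
    intro A B hA hB
    refine ⟨?_, ?_, ?_⟩ <;> ext i <;> have := @hA i <;> have := @hB i <;> simp at * <;> tauto
  refine Set.ncard_le_ncard_of_injOn (fun p => flipCoords (p.1 ∪ p.2) x) ?_ ?_ (Set.toFinite _)
  · rintro ⟨A, B⟩ hAB
    simp only [coe_product, Set.mem_prod, mem_coe, mem_powersetCard] at hAB
    obtain ⟨⟨hA, rfl⟩, hB, rfl⟩ := hAB
    obtain ⟨hAD, hDB, -⟩ := split A B hA hB
    constructor
    · rwa [hammingDist_flipCoords_self, card_union_of_disjoint
        ((subset_compl_iff_disjoint_right.mp hA).mono_right hB)]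
    · rwa [hammingDist_flipCoords, Finset.symmDiff_def,
        card_union_of_disjoint disjoint_sdiff_sdiff, hAD, hDB, card_sdiff_of_subset hB]
  · rintro ⟨A, B⟩ hAB ⟨A', B'⟩ hAB' h
    simp only [coe_product, Set.mem_prod, mem_coe, mem_powersetCard] at hAB hAB'
    have hunion : A ∪ B = A' ∪ B' := flipCoords_left_injective x h
    obtain ⟨hAD, -, hBD⟩ := split A B hAB.1.1 hAB.2.1
    obtain ⟨hAD', -, hBD'⟩ := split A' B' hAB'.1.1 hAB'.2.1
    refine Prod.ext ?_ ?_
    · rw [← hAD, hunion, hAD']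
    · rw [← hBD, hunion, hBD']

end Flip

theorem stmt_19_general (k : ℕ) :
    (∀ x y : Fin (3 * k + 1) → ZMod 2, ∀ t : ℕ, 1 ≤ t → t ≤ k →
      x ≠ y → hammingDist x y = 2 * t →
      Nat.choose (3 * k + 1 - 2 * t) (k - t) * Nat.choose (2 * t) t ≤
        {v | (hypercubeGraph k).Adj v x ∧ (hypercubeGraph k).Adj v y}.ncard) ∧
    (∀ t : ℕ, 1 ≤ t → t ≤ k →
      Nat.choose (2 * k) k ≤
        Nat.choose (3 * k + 1 - 2 * t) (k - t) * Nat.choose (2 * t) t) ∧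
    Nat.choose (3 * k + 1 - 2 * k) (k - k) * Nat.choose (2 * k) k =
      Nat.choose (2 * k) k := by
  refine ⟨fun x y t _ htk _ hxy => ?_, fun t _ htk => centralBinom_le_choose_mul_centralBinom htk,
    choose_mul_centralBinom_at_self k⟩
  have hcount := choose_mul_choose_le_ncard_setOf_le_hammingDist x y (a := 2 * k + 1 - t) (b := t)
    (r := 2 * k + 1) (by omega) (by omega)
  rwa [hxy, Fintype.card_fin, show 2 * k + 1 - t = 3 * k + 1 - 2 * t - (k - t) by omega,
    Nat.choose_symm (by omega)] at hcount

theorem stmt_19 (k : ℕ) (hk : 0 < k) :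
    (∀ x y : Fin (3 * k + 1) → ZMod 2, ∀ t : ℕ, 1 ≤ t → t ≤ k →
      x ≠ y → hammingDist x y = 2 * t →
      Nat.choose (3 * k + 1 - 2 * t) (k - t) * Nat.choose (2 * t) t ≤
        {v | (hypercubeGraph k).Adj v x ∧ (hypercubeGraph k).Adj v y}.ncard) ∧
    (∀ t : ℕ, 1 ≤ t → t ≤ k →
      Nat.choose (2 * k) k ≤
        Nat.choose (3 * k + 1 - 2 * t) (k - t) * Nat.choose (2 * t) t) ∧
    Nat.choose (3 * k + 1 - 2 * k) (k - k) * Nat.choose (2 * k) k =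
      Nat.choose (2 * k) k :=
  stmt_19_general k
end
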